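/- arXiv:2412.06998 — 12 statements merged into one kernel-verified Lean document; each statement's English description precedes it below -/
import Mathlib

section
/- Let L be a frame and a ∈ L. Let ↑a = {x ∈ L | a ≤ x} and ↓a = {x ∈ L | x ≤ a}, each a frame with the inherited order, and let x_a : L → ↑a × ↓a be the frame homomorphism b ↦ (a ⊔ b, a ⊓ b). Then for every frame K and every frame homomorphism k : L → K such that k(a) is complemented in K (i.e., there is b ∈ K with k(a) ⊓ b = ⊥ and k(a) ⊔ b = ⊤), there exists a unique frame homomorphism n : ↑a × ↓a → K with n ∘ x_a = k; moreover n is given by n(u, v) = (k(u) ⊓ b) ⊔ k(v), where b is the complement of k(a). -/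
/-!
`(⊥, ⊤)` and `(⊤, ⊥)` are complements in `↑a × ↓a`, and `x_a a = (⊥, ⊤)`. A frame homomorphism `m`
with `m ∘ x_a = k` therefore sends `(⊤, ⊥)` to the complement `b` of `k a`, and since
`(u, v) = ((u, ⊤) ⊓ (⊤, ⊥)) ⊔ (⊥, v)` with `(u, ⊤) = x_a u` and `(⊥, v) = x_a v`, it is forced to
be `(u, v) ↦ (k u ⊓ b) ⊔ k v`. Conversely this formula defines a frame homomorphism: the cross
terms in a meet vanish because `k v ≤ k a` is disjoint from `b`.
-/

open Set

variable {L : Type*} [Order.Frame L]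

/-- The downset `↓a = {x | x ≤ a}` of a frame is a frame under the inherited order. -/
noncomputable instance Set.Iic.instFrameOfFrame (a : L) : Order.Frame (Set.Iic a) :=
  @Order.Frame.ofMinimalAxioms _ (Set.Iic.instCompleteLattice (a := a))
    {
      inf_sSup_le_iSup_inf := by
        intro x S
        rw [← Subtype.coe_le_coe]
        calc (↑(x ⊓ sSup S) : L) = ↑x ⊓ sSup ((↑) '' S) := rfl
          _ = ⨆ b ∈ ((↑) '' S : Set L), ↑x ⊓ b := inf_sSup_eq
          _ ≤ ↑(⨆ b ∈ S, x ⊓ b) := by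
              rw [iSup_image]
              rw [Set.Iic.coe_biSup]
              exact le_of_eq rfl }

/-- The upset `↑a = {x | a ≤ x}` of a frame is a complete lattice under the inherited
order, with bottom `a`. -/
noncomputable instance Set.Ici.instCompleteLatticeOfFrame (a : L) :
    CompleteLattice (Set.Ici a) :=
  { Set.Ici.lattice, Set.Ici.boundedOrder with
    sSup := fun S => ⟨a ⊔ sSup ((↑) '' S), le_sup_left⟩
    isLUB_sSup := fun S => ⟨fun ⦃b⦄ hb =>
      le_sup_of_le_right (le_sSup (mem_image_of_mem Subtype.val hb)),
      fun b hb => sup_le b.2 (sSup_le (by rintro c ⟨d, hd, rfl⟩; exact hb hd))⟩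
    sInf := fun S => ⟨sInf ((↑) '' S), le_sInf (by rintro c ⟨d, _, rfl⟩; exact d.2)⟩
    isGLB_sInf := fun S => ⟨fun ⦃b⦄ hb => sInf_le (mem_image_of_mem Subtype.val hb),
      fun b hb => le_sInf (by rintro c ⟨d, hd, rfl⟩; exact hb hd)⟩ }

/-- The upset `↑a = {x | a ≤ x}` of a frame is a frame under the inherited order. -/
noncomputable instance Set.Ici.instFrameOfFrame (a : L) : Order.Frame (Set.Ici a) :=
  @Order.Frame.ofMinimalAxioms _ (Set.Ici.instCompleteLatticeOfFrame a)
    {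
      inf_sSup_le_iSup_inf := by
        intro x S
        rw [← Subtype.coe_le_coe]
        calc (↑(x ⊓ sSup S) : L) = ↑x ⊓ (a ⊔ sSup ((↑) '' S)) := rfl
          _ = (↑x ⊓ a) ⊔ (↑x ⊓ sSup ((↑) '' S)) := inf_sup_left _ _ _
          _ = a ⊔ ⨆ b ∈ ((↑) '' S : Set L), ↑x ⊓ b := by
              rw [inf_eq_right.mpr x.2, inf_sSup_eq]
          _ ≤ ↑(⨆ b ∈ S, x ⊓ b) := by
              refine sup_le (⨆ b ∈ S, x ⊓ b).2 ?_
              refine iSup₂_le ?_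
              rintro b ⟨c, hc, rfl⟩
              exact Subtype.coe_le_coe.mpr (le_iSup₂ (f := fun b (_ : b ∈ S) => x ⊓ b) c hc) }

/-- The map `x_a : L → ↑a × ↓a`, `b ↦ (a ⊔ b, a ⊓ b)`, the product of the closed and open
quotient maps associated with `a`. -/
def xMap (a : L) : L → Set.Ici a × Set.Iic a :=
  fun b => (⟨a ⊔ b, le_sup_left⟩, ⟨a ⊓ b, inf_le_left⟩)

theorem sup_inf_sup_of_disjoint {α : Type*} [DistribLattice α] [OrderBot α] {x y x' y' : α}
    (hxy' : Disjoint x y') (hyx' : Disjoint y x') :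
    (x ⊔ y) ⊓ (x' ⊔ y') = (x ⊓ x') ⊔ (y ⊓ y') := by
  rw [inf_sup_right, inf_sup_left, inf_sup_left, hxy'.eq_bot, hyx'.eq_bot, sup_bot_eq,
    bot_sup_eq]

theorem xMap_of_le {a u : L} (h : a ≤ u) : xMap a u = (⟨u, h⟩, ⊤) :=
  Prod.ext (Subtype.ext (sup_eq_right.mpr h)) (Subtype.ext (inf_eq_left.mpr h))

theorem xMap_of_ge {a v : L} (h : v ≤ a) : xMap a v = (⊥, ⟨v, h⟩) :=
  Prod.ext (Subtype.ext (sup_eq_left.mpr h)) (Subtype.ext (inf_eq_right.mpr h))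

section Lift

variable {K : Type*} [Order.Frame K] {a : L} {k : FrameHom L K} {b : K}

theorem disjoint_map_coe_Iic (hb : IsCompl (k a) b) (v : Iic a) : Disjoint (k v) b :=
  hb.disjoint.mono_left (OrderHomClass.mono k v.2)

theorem map_coe_sSup_Ici_inf (hb : IsCompl (k a) b) (S : Set (Ici a)) :
    k ↑(sSup S) ⊓ b = ⨆ u ∈ S, k u ⊓ b := by
  change k (a ⊔ sSup ((↑) '' S)) ⊓ b = _
  rw [map_sup, inf_sup_right, hb.inf_eq_bot, bot_sup_eq, map_sSup, sSup_image, iSup_image,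
    iSup₂_inf_eq]

theorem map_coe_sSup_Iic (T : Set (Iic a)) : k ↑(sSup T) = ⨆ v ∈ T, k v := by
  rw [Iic.coe_sSup, map_sSup, sSup_image, iSup_image]

def xMapLift (hb : IsCompl (k a) b) : FrameHom (Ici a × Iic a) K where
  toFun p := (k p.1 ⊓ b) ⊔ k p.2
  map_inf' p q := by
    change (k (↑p.1 ⊓ ↑q.1) ⊓ b) ⊔ k (↑p.2 ⊓ ↑q.2) = _
    rw [sup_inf_sup_of_disjoint ((disjoint_map_coe_Iic hb q.2).symm.mono_left inf_le_right)
      ((disjoint_map_coe_Iic hb p.2).mono_right inf_le_right), inf_inf_inf_comm, inf_idem,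
      map_inf, map_inf]
  map_top' := by
    change (k ⊤ ⊓ b) ⊔ k a = ⊤
    rw [map_top, top_inf_eq, sup_comm, hb.sup_eq_top]
  map_sSup' S := by
    change (k ↑(sSup S).1 ⊓ b) ⊔ k ↑(sSup S).2 = _
    rw [Prod.fst_sSup, Prod.snd_sSup, map_coe_sSup_Ici_inf hb, map_coe_sSup_Iic, iSup_image,
      iSup_image, sSup_image, iSup_subtype', iSup_subtype', iSup_subtype', iSup_sup_eq]

theorem xMapLift_xMap (hb : IsCompl (k a) b) (x : L) : xMapLift hb (xMap a x) = k x := by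
  change (k (a ⊔ x) ⊓ b) ⊔ k (a ⊓ x) = k x
  rw [map_sup, inf_sup_right, hb.inf_eq_bot, bot_sup_eq, map_inf, inf_comm (k a), ← inf_sup_left,
    sup_comm, hb.sup_eq_top, inf_top_eq]

theorem apply_eq_of_map_xMap (hb : IsCompl (k a) b) {m : FrameHom (Ici a × Iic a) K}
    (hm : ∀ x, m (xMap a x) = k x) (u : Ici a) (v : Iic a) :
    m (u, v) = (k u ⊓ b) ⊔ k v := by
  have hka : m (⊥, ⊤) = k a := by rw [← hm, xMap_of_le le_rfl]; rfl
  have hmb : m (⊤, ⊥) = b := by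
    have hcompl : IsCompl (m (⊥, ⊤)) (m (⊤, ⊥)) :=
      (Prod.isCompl_iff.mpr ⟨isCompl_bot_top, isCompl_top_bot⟩).map m
    exact (hka ▸ hcompl).right_unique hb
  have hdecomp : (u, v) = ((u, ⊤) ⊓ (⊤, ⊥)) ⊔ (⊥, v) := by ext <;> simp
  rw [hdecomp, map_sup, map_inf, hmb, ← hm, ← hm, xMap_of_le u.2, xMap_of_ge v.2]

theorem eq_xMapLift_of_map_xMap (hb : IsCompl (k a) b) {m : FrameHom (Ici a × Iic a) K}
    (hm : ∀ x, m (xMap a x) = k x) : m = xMapLift hb :=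
  DFunLike.ext _ _ fun ⟨u, v⟩ => apply_eq_of_map_xMap hb hm u v

end Lift

/-- Lemma 5: `a` is freely complemented in the extension `x_a : L → ↑a × ↓a`.  For every
frame `K` and every frame homomorphism `k : L → K` such that `k a` has a complement `b` in
`K`, there is a unique frame homomorphism `n : ↑a × ↓a → K` with `n ∘ x_a = k`; moreover
`n` is given by `n (u, v) = (k u ⊓ b) ⊔ k v`. -/
theorem freely_complemented {K : Type*} [Order.Frame K] (a : L) (k : FrameHom L K)
    (b : K) (hb₁ : k a ⊓ b = ⊥) (hb₂ : k a ⊔ b = ⊤) :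
    (∃! n : FrameHom (Set.Ici a × Set.Iic a) K, ∀ x : L, n (xMap a x) = k x) ∧
      ∀ n : FrameHom (Set.Ici a × Set.Iic a) K, (∀ x : L, n (xMap a x) = k x) →
        ∀ (u : Set.Ici a) (v : Set.Iic a), n (u, v) = (k ↑u ⊓ b) ⊔ k ↑v := by
  have hb : IsCompl (k a) b := .of_eq hb₁ hb₂
  exact ⟨⟨xMapLift hb, xMapLift_xMap hb, fun _ => eq_xMapLift_of_map_xMap hb⟩,
    fun _ => apply_eq_of_map_xMap hb⟩
end

section
/- Let M be a frame and f, g : Opens ℝ → M frame homomorphisms. Then for every ε > 0, ⨆ { f(U) ⊓ g(V) | U, V open subsets of ℝ such that |u − v| > ε for all u ∈ U and v ∈ V } = ⨆_{s ∈ ℝ} [ (f((−∞,s)) ⊓ g((s+ε,∞))) ⊔ (g((−∞,s)) ⊓ f((s+ε,∞))) ]. (The left-hand side is the value |f − g|((ε,∞)) of the absolute difference of f and g at the open ray (ε,∞).) -/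
open TopologicalSpace Set

/-- The open interval `(a, ∞)` as an open subset of `ℝ`. -/
def oIoi (a : ℝ) : Opens ℝ := ⟨Set.Ioi a, isOpen_Ioi⟩

/-- The open interval `(-∞, a)` as an open subset of `ℝ`. -/
def oIio (a : ℝ) : Opens ℝ := ⟨Set.Iio a, isOpen_Iio⟩

/-- The open interval `(a, b)` as an open subset of `ℝ`. -/
def oIoo (a b : ℝ) : Opens ℝ := ⟨Set.Ioo a b, isOpen_Ioo⟩

private lemma opens_eq_iSup_oIoo (U : Opens ℝ) :
    U = ⨆ p : {p : ℝ × ℝ // Set.Ioo p.1 p.2 ⊆ (U : Set ℝ)}, oIoo p.1.1 p.1.2 := by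
  apply le_antisymm
  · intro x hx
    obtain ⟨l, u, hmem, hsub⟩ :=
      mem_nhds_iff_exists_Ioo_subset.1 (U.isOpen.mem_nhds hx)
    exact Opens.mem_iSup.2 ⟨⟨(l, u), hsub⟩, hmem⟩
  · apply iSup_le
    rintro ⟨⟨a, b⟩, h⟩
    exact fun x hx => h hx

private lemma dichotomy {a b c d ε : ℝ} (hε : 0 < ε) (hab : a < b) (hcd : c < d)
    (hsep : ∀ x ∈ Set.Ioo a b, ∀ y ∈ Set.Ioo c d, ε < |x - y|) :
    (∀ x ∈ Set.Ioo a b, ∀ y ∈ Set.Ioo c d, x + ε < y) ∨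
      (∀ x ∈ Set.Ioo a b, ∀ y ∈ Set.Ioo c d, y + ε < x) := by
  by_contra hcon
  push_neg at hcon
  obtain ⟨⟨x1, hx1, y1, hy1, h1⟩, ⟨x2, hx2, y2, hy2, h2⟩⟩ := hcon
  -- from hsep and h1 : y1 ≤ x1 + ε, get y1 + ε < x1
  have e1 : y1 + ε < x1 := by
    rcases lt_abs.mp (hsep x1 hx1 y1 hy1) with h | h
    · linarith
    · linarith
  have e2 : x2 + ε < y2 := by
    rcases lt_abs.mp (hsep x2 hx2 y2 hy2) with h | h
    · linarith
    · linarith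
  rcases lt_abs.mp (hsep x1 hx1 y2 hy2) with h | h
  · -- x1 - y2 > ε, so x2 < y2 < x1, y2 ∈ Ioo a b
    have hy2' : y2 ∈ Set.Ioo a b := ⟨lt_trans hx2.1 (by linarith), by linarith [hx1.2]⟩
    have := hsep y2 hy2' y2 hy2
    simp at this; linarith
  · -- y2 - x1 > ε, so y1 < x1 < y2, x1 ∈ Ioo c d
    have hx1' : x1 ∈ Set.Ioo c d := ⟨lt_trans hy1.1 (by linarith), by linarith [hy2.2]⟩
    have := hsep x1 hx1 x1 hx1'
    simp at this; linarith

private lemma gap_le {a b c d ε : ℝ} (hab : a < b) (hcd : c < d)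
    (h : ∀ x ∈ Set.Ioo a b, ∀ y ∈ Set.Ioo c d, x + ε < y) : b + ε ≤ c := by
  have hy : ∀ y ∈ Set.Ioo c d, b + ε ≤ y := by
    intro y hy
    by_contra hby
    push_neg at hby
    have hmax : max a (y - ε) < b := max_lt hab (by linarith)
    set t := (max a (y - ε) + b) / 2 with ht
    have ht1 : max a (y - ε) < t := by simp only [ht]; linarith
    have ht2 : t < b := by simp only [ht]; linarith
    have htab : t ∈ Set.Ioo a b := ⟨lt_of_le_of_lt (le_max_left _ _) ht1, ht2⟩
    have := h t htab y hy
    have : y - ε < t := lt_of_le_of_lt (le_max_right _ _) ht1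
    linarith [h t htab y hy]
  by_contra hbc
  push_neg at hbc
  have hmin : c < min d (b + ε) := lt_min hcd hbc
  set y := (c + min d (b + ε)) / 2 with hy'
  have hy1 : c < y := by simp only [hy']; linarith
  have hy2 : y < min d (b + ε) := by simp only [hy']; linarith
  have : y ∈ Set.Ioo c d := ⟨hy1, lt_of_lt_of_le hy2 (min_le_left _ _)⟩
  have := hy y this
  have : y < b + ε := lt_of_lt_of_le hy2 (min_le_right _ _)
  linarith [hy ((c + min d (b + ε)) / 2) ⟨hy1, lt_of_lt_of_le hy2 (min_le_left _ _)⟩]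


/-- Lemma 17, first identity: for frame homomorphisms `f g : Opens ℝ → M` and `ε > 0`,
`|f − g|((ε,∞)) = ⨆ s, (f((−∞,s)) ⊓ g((s+ε,∞))) ⊔ (g((−∞,s)) ⊓ f((s+ε,∞)))`. -/
theorem abs_sub_apply_Ioi_eq {M : Type*} [Order.Frame M] (f g : FrameHom (Opens ℝ) M)
    (ε : ℝ) (hε : 0 < ε) :
    sSup {x : M | ∃ U V : Opens ℝ, (∀ u ∈ U, ∀ v ∈ V, ε < |u - v|) ∧ x = f U ⊓ g V} =
      ⨆ s : ℝ, (f (oIio s) ⊓ g (oIoi (s + ε))) ⊔ (g (oIio s) ⊓ f (oIoi (s + ε))) := by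
  apply le_antisymm
  · apply sSup_le
    rintro x ⟨U, V, hsep, rfl⟩
    rw [opens_eq_iSup_oIoo U, opens_eq_iSup_oIoo V, map_iSup, map_iSup, iSup_inf_eq]
    apply iSup_le
    rintro ⟨⟨a, b⟩, habU⟩
    rw [inf_iSup_eq]
    apply iSup_le
    rintro ⟨⟨c, d⟩, hcdV⟩
    by_cases h1 : a < b
    · by_cases h2 : c < d
      · have hsep' : ∀ x ∈ Set.Ioo a b, ∀ y ∈ Set.Ioo c d, ε < |x - y| :=
          fun x hx y hy => hsep x (habU hx) y (hcdV hy)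
        rcases dichotomy hε h1 h2 hsep' with h | h
        · have hbc : b + ε ≤ c := gap_le h1 h2 h
          refine le_trans (inf_le_inf (OrderHomClass.mono f ?_) (OrderHomClass.mono g ?_))
            (le_iSup_of_le b (le_sup_left.trans (le_refl _)))
          · exact fun x hx => hx.2
          · exact fun y hy => lt_of_le_of_lt hbc hy.1
        · have hdc : d + ε ≤ a := gap_le h2 h1 (fun y hy x hx => h x hx y hy)
          refine le_trans (le_of_eq (inf_comm _ _)) ?_
          refine le_trans (inf_le_inf (OrderHomClass.mono g ?_) (OrderHomClass.mono f ?_))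
            (le_iSup_of_le d (le_sup_right.trans (le_refl _)))
          · exact fun y hy => hy.2
          · exact fun x hx => lt_of_le_of_lt hdc hx.1
      · have : oIoo c d = ⊥ := by apply Opens.ext; simp [oIoo, Set.Ioo_eq_empty h2]
        rw [this, map_bot, inf_bot_eq]; exact bot_le
    · have : oIoo a b = ⊥ := by apply Opens.ext; simp [oIoo, Set.Ioo_eq_empty h1]
      rw [this, map_bot, bot_inf_eq]; exact bot_le
  · apply iSup_le
    intro s
    apply sup_le
    · apply le_sSup
      refine ⟨oIio s, oIoi (s + ε), ?_, rfl⟩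
      intro u hu v hv
      have hu' : u < s := hu
      have hv' : s + ε < v := hv
      rw [abs_sub_comm, abs_of_pos (by linarith)]
      linarith
    · apply le_sSup
      refine ⟨oIoi (s + ε), oIio s, ?_, (inf_comm _ _)⟩
      intro u hu v hv
      have hu' : s + ε < u := hu
      have hv' : v < s := hv
      rw [abs_of_pos (by linarith)]
      linarith
end

section
/- Let M be a frame and f, g : Opens ℝ → M frame homomorphisms. Then for every ε > 0, ⨆ { f(U) ⊓ g(V) | U, V open subsets of ℝ such that |u − v| < ε for all u ∈ U and v ∈ V } = ⨆_{s ∈ ℝ} [ f((s − ε/2, s + ε/2)) ⊓ g((s − ε/2, s + ε/2)) ]. (The left-hand side is the value |f − g|((−∞,ε)) of the absolute difference of f and g at the ray (−∞,ε).) -/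
open TopologicalSpace Set

lemma mem_interval_aux {A B : Set ℝ} (hA : IsOpen A) {s ε : ℝ}
    (hAs : A ⊆ Set.Ioo (s - ε/2) (s + ε/2))
    (h : ∀ a ∈ A, ∀ b ∈ B, |a - b| < ε) (hBne : B.Nonempty)
    {x : ℝ} (hx : x ∈ A) :
    x ∈ Set.Ioo ((min (sInf A) (sInf B) + max (sSup A) (sSup B))/2 - ε/2)
      ((min (sInf A) (sInf B) + max (sSup A) (sSup B))/2 + ε/2) := by
  obtain ⟨δ, hδ, hball⟩ := Metric.isOpen_iff.1 hA x hx
  have hx0 : x - δ/2 ∈ A := hball (by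
    rw [Metric.mem_ball, Real.dist_eq, show x - δ/2 - x = -(δ/2) by ring, abs_neg,
      abs_of_pos (by linarith)]; linarith)
  have hx1 : x + δ/2 ∈ A := hball (by
    rw [Metric.mem_ball, Real.dist_eq, show x + δ/2 - x = δ/2 by ring,
      abs_of_pos (by linarith)]; linarith)
  have hbddA : BddAbove A := ⟨s + ε/2, fun a ha => (hAs ha).2.le⟩
  have hbddBA : BddBelow A := ⟨s - ε/2, fun a ha => (hAs ha).1.le⟩
  have h1 : sInf A ≤ x - δ/2 := csInf_le hbddBA hx0
  have h3 : sSup B ≤ (x - δ/2) + ε := csSup_le hBne (fun b hb => by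
    have := h _ hx0 b hb; rw [abs_sub_lt_iff] at this; linarith)
  have h4 : x ≤ sSup A := le_csSup hbddA hx
  have h6 : (x + δ/2) - ε ≤ sInf B := le_csInf hBne (fun b hb => by
    have := h _ hx1 b hb; rw [abs_sub_lt_iff] at this; linarith)
  have h2 : sSup A ≤ s + ε/2 := csSup_le ⟨x, hx⟩ (fun a ha => (hAs ha).2.le)
  have h5 : s - ε/2 ≤ sInf A := le_csInf ⟨x, hx⟩ (fun a ha => (hAs ha).1.le)
  have hb0 := (hAs hx0).1
  have hb1 := (hAs hx1).2
  have hMx : max (sSup A) (sSup B) ≤ x - δ/2 + ε := max_le (by linarith) (by linarith)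
  have hm : x + δ/2 - ε ≤ min (sInf A) (sInf B) := le_min (by linarith) (by linarith)
  have hm' : min (sInf A) (sInf B) ≤ sInf A := min_le_left _ _
  have hMx' : sSup A ≤ max (sSup A) (sSup B) := le_max_left _ _
  constructor <;> [linarith; linarith]

lemma union_subset_interval {A B : Set ℝ} (hA : IsOpen A) (hB : IsOpen B) {s t ε : ℝ}
    (hAs : A ⊆ Set.Ioo (s - ε/2) (s + ε/2)) (hBt : B ⊆ Set.Ioo (t - ε/2) (t + ε/2))
    (h : ∀ a ∈ A, ∀ b ∈ B, |a - b| < ε) (hAne : A.Nonempty) (hBne : B.Nonempty) :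
    ∃ c : ℝ, A ∪ B ⊆ Set.Ioo (c - ε/2) (c + ε/2) := by
  refine ⟨(min (sInf A) (sInf B) + max (sSup A) (sSup B))/2, ?_⟩
  rintro x (hx | hx)
  · exact mem_interval_aux hA hAs h hBne hx
  · have := mem_interval_aux hB hBt
      (fun b hb a ha => by rw [abs_sub_comm]; exact h a ha b hb) hAne hx
    rwa [min_comm (sInf B), max_comm (sSup B)] at this

lemma opens_eq_iSup (ε : ℝ) (hε : 0 < ε) (U : Opens ℝ) :
    U = ⨆ s : ℝ, U ⊓ oIoo (s - ε / 2) (s + ε / 2) := by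
  ext x
  simp only [SetLike.mem_coe, Opens.mem_iSup]
  constructor
  · intro hx
    exact ⟨x, hx, by simp only [oIoo, Opens.mem_mk, Set.mem_Ioo]; constructor <;> linarith⟩
  · rintro ⟨s, hs, -⟩; exact hs

/-- Lemma 17, second identity: for frame homomorphisms `f g : Opens ℝ → M` and `ε > 0`,
`|f − g|((−∞,ε)) = ⨆ s, f(s − ε/2, s + ε/2) ⊓ g(s − ε/2, s + ε/2)`. -/
theorem abs_sub_apply_Iio_eq {M : Type*} [Order.Frame M] (f g : FrameHom (Opens ℝ) M)
    (ε : ℝ) (hε : 0 < ε) :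
    sSup {x : M | ∃ U V : Opens ℝ, (∀ u ∈ U, ∀ v ∈ V, |u - v| < ε) ∧ x = f U ⊓ g V} =
      ⨆ s : ℝ, f (oIoo (s - ε / 2) (s + ε / 2)) ⊓ g (oIoo (s - ε / 2) (s + ε / 2)) := by
  apply le_antisymm
  · refine sSup_le ?_
    rintro x ⟨U, V, hUV, rfl⟩
    have hfU : f U = ⨆ s : ℝ, f (U ⊓ oIoo (s - ε / 2) (s + ε / 2)) := by
      conv_lhs => rw [opens_eq_iSup ε hε U]
      exact map_iSup f _
    have hgV : g V = ⨆ t : ℝ, g (V ⊓ oIoo (t - ε / 2) (t + ε / 2)) := by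
      conv_lhs => rw [opens_eq_iSup ε hε V]
      exact map_iSup g _
    rw [hfU, hgV, iSup_inf_eq]
    refine iSup_le fun s => ?_
    rw [inf_iSup_eq]
    refine iSup_le fun t => ?_
    set A : Opens ℝ := U ⊓ oIoo (s - ε / 2) (s + ε / 2) with hA
    set B : Opens ℝ := V ⊓ oIoo (t - ε / 2) (t + ε / 2) with hB
    rcases eq_or_ne A ⊥ with hAbot | hAne
    · rw [hAbot, map_bot]; simp
    rcases eq_or_ne B ⊥ with hBbot | hBne
    · rw [hBbot, map_bot]; simp
    have hAne' : (A : Set ℝ).Nonempty := by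
      rw [Set.nonempty_iff_ne_empty]
      intro hcon
      exact hAne (by ext y; simp only [hcon]; simp)
    have hBne' : (B : Set ℝ).Nonempty := by
      rw [Set.nonempty_iff_ne_empty]
      intro hcon
      exact hBne (by ext y; simp only [hcon]; simp)
    have hAsub : (A : Set ℝ) ⊆ Set.Ioo (s - ε/2) (s + ε/2) := fun y hy => hy.2
    have hBsub : (B : Set ℝ) ⊆ Set.Ioo (t - ε/2) (t + ε/2) := fun y hy => hy.2
    have hcond : ∀ a ∈ (A : Set ℝ), ∀ b ∈ (B : Set ℝ), |a - b| < ε :=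
      fun a ha b hb => hUV a ha.1 b hb.1
    obtain ⟨c, hc⟩ := union_subset_interval A.isOpen B.isOpen hAsub hBsub hcond hAne' hBne'
    have hAle : A ≤ oIoo (c - ε / 2) (c + ε / 2) :=
      fun y hy => hc (Set.mem_union_left _ hy)
    have hBle : B ≤ oIoo (c - ε / 2) (c + ε / 2) :=
      fun y hy => hc (Set.mem_union_right _ hy)
    calc f A ⊓ g B ≤ f (oIoo (c - ε / 2) (c + ε / 2)) ⊓ g (oIoo (c - ε / 2) (c + ε / 2)) :=
          inf_le_inf (OrderHomClass.mono f hAle) (OrderHomClass.mono g hBle)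
      _ ≤ _ := le_iSup (fun s => f (oIoo (s - ε / 2) (s + ε / 2)) ⊓ g (oIoo (s - ε / 2) (s + ε / 2))) c
  · refine iSup_le fun s => le_sSup ⟨oIoo (s - ε / 2) (s + ε / 2), oIoo (s - ε / 2) (s + ε / 2), ?_, rfl⟩
    intro u hu v hv
    simp only [oIoo, Opens.mem_mk, Set.mem_Ioo] at hu hv
    rw [abs_sub_lt_iff]
    constructor <;> linarith [hu.1, hu.2, hv.1, hv.2]
end

section
/- Let M be a frame, f, g : Opens ℝ → M frame homomorphisms, U an open subset of ℝ, and ε > 0. Let U°_ε = {v ∈ ℝ | the open ball of radius ε about v is contained in U}, an open subset of ℝ. Then ( ⨆_{s ∈ ℝ} f((s − ε/2, s + ε/2)) ⊓ g((s − ε/2, s + ε/2)) ) ⊓ f(U°_ε) ≤ g(U). -/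
open TopologicalSpace Set

/-- The `ε`-interior of `U`: the largest open subset every point of which has its
`ε`-ball contained in `U`. -/
def epsInterior (U : Set ℝ) (ε : ℝ) : Opens ℝ :=
  ⟨interior {v : ℝ | Metric.ball v ε ⊆ U}, isOpen_interior⟩

/-- Lemma 19: `|f − g|((−∞,ε)) ⊓ f(U°_ε) ≤ g(U)`. -/
theorem abs_sub_lt_inf_epsInterior_le {M : Type*} [Order.Frame M]
    (f g : FrameHom (Opens ℝ) M) (U : Opens ℝ) (ε : ℝ) (hε : 0 < ε) :
    (⨆ s : ℝ, f (oIoo (s - ε / 2) (s + ε / 2)) ⊓ g (oIoo (s - ε / 2) (s + ε / 2))) ⊓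
        f (epsInterior (U : Set ℝ) ε) ≤
      g U := by
  rw [iSup_inf_eq]
  refine iSup_le fun s => ?_
  by_cases h : ((oIoo (s - ε / 2) (s + ε / 2) : Opens ℝ) ⊓
      epsInterior (U : Set ℝ) ε : Opens ℝ) = ⊥
  · calc f (oIoo (s - ε / 2) (s + ε / 2)) ⊓ g (oIoo (s - ε / 2) (s + ε / 2)) ⊓
        f (epsInterior (U : Set ℝ) ε)
        ≤ f (oIoo (s - ε / 2) (s + ε / 2)) ⊓ f (epsInterior (U : Set ℝ) ε) :=
          inf_le_inf_right _ inf_le_left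
      _ = f ((oIoo (s - ε / 2) (s + ε / 2) : Opens ℝ) ⊓ epsInterior (U : Set ℝ) ε) :=
          (map_inf f _ _).symm
      _ = ⊥ := by rw [h, map_bot]
      _ ≤ g U := bot_le
  · -- nonempty intersection: the interval is contained in U
    obtain ⟨x, hx⟩ : (((oIoo (s - ε / 2) (s + ε / 2) : Opens ℝ) : Set ℝ) ∩
        epsInterior (U : Set ℝ) ε).Nonempty := by
      rw [Set.nonempty_iff_ne_empty]
      intro he
      apply h
      apply Opens.ext
      simpa using he
    have hxI : x ∈ Set.Ioo (s - ε / 2) (s + ε / 2) := hx.1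
    have hxE : Metric.ball x ε ⊆ U := by
      have := interior_subset (s := {v : ℝ | Metric.ball v ε ⊆ (U : Set ℝ)}) hx.2
      exact this
    have hsub : (oIoo (s - ε / 2) (s + ε / 2) : Opens ℝ) ≤ U := by
      intro y hy
      apply hxE
      have hy' : y ∈ Set.Ioo (s - ε / 2) (s + ε / 2) := hy
      rw [Metric.mem_ball, Real.dist_eq]
      have h1 := hxI.1; have h2 := hxI.2
      have h3 := hy'.1; have h4 := hy'.2
      rw [abs_lt]; constructor <;> linarith
    calc f (oIoo (s - ε / 2) (s + ε / 2)) ⊓ g (oIoo (s - ε / 2) (s + ε / 2)) ⊓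
        f (epsInterior (U : Set ℝ) ε)
        ≤ g (oIoo (s - ε / 2) (s + ε / 2)) := le_trans inf_le_left inf_le_right
      _ ≤ g U := OrderHomClass.mono g hsub
end

section
/- Let M be a frame, let g, f : Opens ℝ → M be frame homomorphisms with g((−∞,0)) = ⊥ and f((−∞,0)) = ⊥, and let k be a positive integer. Then the following are equivalent: (i) for all ε > 0, f((−kε, kε)) ≤ g((−ε, ε)); (ii) for all ε > 0, g((ε, ∞)) ≤ f((kε, ∞)). -/
open TopologicalSpace Set

lemma cover_top {M : Type*} [Order.Frame M] (h : FrameHom (Opens ℝ) M)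
    (h0 : h (oIio 0) = ⊥) (U V : Opens ℝ)
    (hcov : Set.Iio (0:ℝ) ∪ (U : Set ℝ) ∪ (V : Set ℝ) = Set.univ) :
    (⊤ : M) = h U ⊔ h V := by
  have htop : (⊤ : Opens ℝ) = oIio 0 ⊔ U ⊔ V := by
    apply Opens.ext
    simpa [oIio] using hcov.symm
  calc (⊤ : M) = h ⊤ := (map_top h).symm
    _ = h (oIio 0) ⊔ h U ⊔ h V := by rw [htop, map_sup, map_sup]
    _ = h U ⊔ h V := by rw [h0, bot_sup_eq]

lemma oIoi_eq_iSup (ε : ℝ) : oIoi ε = ⨆ ε' : Set.Ioi ε, oIoi (ε' : ℝ) := by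
  apply Opens.ext
  rw [Opens.coe_iSup]
  ext x
  simp only [oIoi, Opens.coe_mk, Set.mem_Ioi, Set.mem_iUnion]
  constructor
  · intro hx
    exact ⟨⟨(ε + x) / 2, by simp only [Set.mem_Ioi] at hx ⊢; linarith⟩, by simp only [oIoi, Opens.coe_mk, Set.mem_Ioi] at hx ⊢; linarith⟩
  · rintro ⟨⟨ε', hε'⟩, hx⟩
    simp only [Set.mem_Ioi] at hε' hx
    linarith

lemma oIoo_eq_iSup (k ε : ℝ) (hk : 0 < k) (hε : 0 < ε) :
    oIoo (-(k * ε)) (k * ε) = ⨆ ε' : Set.Ioo (0:ℝ) ε, oIoo (-(k * ε')) (k * ε') := by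
  apply Opens.ext
  rw [Opens.coe_iSup]
  ext x
  simp only [oIoo, Opens.coe_mk, Set.mem_Ioo, Set.mem_iUnion]
  constructor
  · intro hx
    have habs : |x| < k * ε := abs_lt.mpr hx
    have h1 : |x| / k < ε := (div_lt_iff₀' hk).mpr habs
    have h0 : 0 ≤ |x| / k := div_nonneg (abs_nonneg x) hk.le
    refine ⟨⟨(|x| / k + ε) / 2, by simp [Set.mem_Ioo]; constructor <;> linarith⟩, ?_⟩
    have : |x| < k * ((|x| / k + ε) / 2) := by
      have : k * (|x| / k) = |x| := by field_simp
      nlinarith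
    exact abs_lt.mp this
  · rintro ⟨⟨ε', hε'⟩, hx⟩
    simp only [Set.mem_Ioo] at hε'
    have : k * ε' < k * ε := by nlinarith [hε'.2]
    constructor <;> linarith [hx.1, hx.2]

lemma disj_bot (a : ℝ) : oIoi a ⊓ oIoo (-a) a = ⊥ := by
  apply Opens.ext
  simp only [Opens.coe_inf, Opens.coe_bot, oIoi, oIoo]
  ext x
  simp only [Opens.coe_mk, Set.mem_inter_iff, Set.mem_Ioi, Set.mem_Ioo, Set.mem_empty_iff_false, iff_false]
  rintro ⟨h1, _, h2⟩
  linarith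

lemma disj_bot' (a : ℝ) : oIoo (-a) a ⊓ oIoi a = ⊥ := by
  rw [inf_comm]; exact disj_bot a

/-- Lemma 16, equivalence of (2) and (3): for nonnegative `g f : Opens ℝ → M` and a positive
integer `k`, `∀ ε > 0, f((−kε,kε)) ≤ g((−ε,ε))` iff `∀ ε > 0, g((ε,∞)) ≤ f((kε,∞))`. -/
theorem nonneg_le_div_iff {M : Type*} [Order.Frame M] (g f : FrameHom (Opens ℝ) M)
    (hg : g (oIio 0) = ⊥) (hf : f (oIio 0) = ⊥) (k : ℕ) (hk : 0 < k) :
    (∀ ε : ℝ, 0 < ε → f (oIoo (-((k : ℝ) * ε)) ((k : ℝ) * ε)) ≤ g (oIoo (-ε) ε)) ↔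
      ∀ ε : ℝ, 0 < ε → g (oIoi ε) ≤ f (oIoi ((k : ℝ) * ε)) := by
  have hk' : (0:ℝ) < (k : ℝ) := by exact_mod_cast hk
  constructor
  · intro H ε hε
    rw [oIoi_eq_iSup ε, map_iSup, iSup_le_iff]
    rintro ⟨ε', hε'⟩
    simp only [Set.mem_Ioi] at hε'
    have hε'0 : 0 < ε' := hε.trans hε'
    -- cover: Iio 0 ∪ Ioo(-kε', kε') ∪ Ioi (kε) = univ
    have hcov : Set.Iio (0:ℝ) ∪ (oIoo (-((k:ℝ) * ε')) ((k:ℝ) * ε') : Set ℝ)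
        ∪ (oIoi ((k:ℝ) * ε) : Set ℝ) = Set.univ := by
      ext x
      simp only [oIoo, oIoi, Opens.coe_mk, Set.mem_union, Set.mem_Iio, Set.mem_Ioo, Set.mem_Ioi,
        Set.mem_univ, iff_true]
      have hlt : (k:ℝ) * ε < (k:ℝ) * ε' := by nlinarith
      by_cases h1 : x < 0
      · exact Or.inl (Or.inl h1)
      · by_cases h2 : x < (k:ℝ) * ε'
        · exact Or.inl (Or.inr ⟨by push_neg at h1; nlinarith, h2⟩)
        · exact Or.inr (by push_neg at h2; linarith)
    have htop := cover_top f hf _ _ hcov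
    calc g (oIoi ε') = g (oIoi ε') ⊓ ⊤ := (inf_top_eq _).symm
      _ = (g (oIoi ε') ⊓ f (oIoo (-((k:ℝ) * ε')) ((k:ℝ) * ε')))
            ⊔ (g (oIoi ε') ⊓ f (oIoi ((k:ℝ) * ε))) := by rw [htop, inf_sup_left]
      _ ≤ f (oIoi ((k:ℝ) * ε)) := by
          apply sup_le _ inf_le_right
          calc g (oIoi ε') ⊓ f (oIoo (-((k:ℝ) * ε')) ((k:ℝ) * ε'))
              ≤ g (oIoi ε') ⊓ g (oIoo (-ε') ε') :=
                inf_le_inf_left _ (H ε' hε'0)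
            _ = g (oIoi ε' ⊓ oIoo (-ε') ε') := (map_inf g _ _).symm
            _ = ⊥ := by rw [disj_bot, map_bot]
            _ ≤ _ := bot_le
  · intro H ε hε
    rw [oIoo_eq_iSup (k:ℝ) ε hk' hε, map_iSup, iSup_le_iff]
    rintro ⟨ε', hε'⟩
    simp only [Set.mem_Ioo] at hε'
    obtain ⟨hε'0, hε'ε⟩ := hε'
    -- cover: Iio 0 ∪ Ioo(-ε, ε) ∪ Ioi ε' = univ
    have hcov : Set.Iio (0:ℝ) ∪ (oIoo (-ε) ε : Set ℝ) ∪ (oIoi ε' : Set ℝ) = Set.univ := by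
      ext x
      simp only [oIoo, oIoi, Opens.coe_mk, Set.mem_union, Set.mem_Iio, Set.mem_Ioo, Set.mem_Ioi,
        Set.mem_univ, iff_true]
      by_cases h1 : x < 0
      · exact Or.inl (Or.inl h1)
      · by_cases h2 : x < ε
        · exact Or.inl (Or.inr ⟨by push_neg at h1; linarith, h2⟩)
        · exact Or.inr (by push_neg at h2; linarith)
    have htop := cover_top g hg _ _ hcov
    calc f (oIoo (-((k:ℝ) * ε')) ((k:ℝ) * ε'))
        = f (oIoo (-((k:ℝ) * ε')) ((k:ℝ) * ε')) ⊓ ⊤ := (inf_top_eq _).symm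
      _ = (f (oIoo (-((k:ℝ) * ε')) ((k:ℝ) * ε')) ⊓ g (oIoo (-ε) ε))
            ⊔ (f (oIoo (-((k:ℝ) * ε')) ((k:ℝ) * ε')) ⊓ g (oIoi ε')) := by
          rw [htop, inf_sup_left]
      _ ≤ g (oIoo (-ε) ε) := by
          apply sup_le inf_le_right
          calc f (oIoo (-((k:ℝ) * ε')) ((k:ℝ) * ε')) ⊓ g (oIoi ε')
              ≤ f (oIoo (-((k:ℝ) * ε')) ((k:ℝ) * ε')) ⊓ f (oIoi ((k:ℝ) * ε')) :=
                inf_le_inf_left _ (H ε' hε'0)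
            _ = f (oIoo (-((k:ℝ) * ε')) ((k:ℝ) * ε') ⊓ oIoi ((k:ℝ) * ε')) :=
                (map_inf f _ _).symm
            _ = ⊥ := by rw [disj_bot', map_bot]
            _ ≤ _ := bot_le
end

section
/- Let M be a frame, let g₁, g₂, f : Opens ℝ → M be frame homomorphisms, and let k be a positive integer. Then the following are equivalent: (i) for all ε > 0, ⨆_{s ∈ ℝ} [ (g₁((−∞,s)) ⊓ g₂((s+ε,∞))) ⊔ (g₂((−∞,s)) ⊓ g₁((s+ε,∞))) ] ≤ f((kε, ∞)); (ii) for all ε > 0, f((−∞, kε)) ≤ ⨆_{s ∈ ℝ} [ g₁((s − ε/2, s + ε/2)) ⊓ g₂((s − ε/2, s + ε/2)) ]. -/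
open TopologicalSpace Set

section Aux

variable {M : Type*} [Order.Frame M]

lemma oIio_inf_oIoi {a b : ℝ} (h : a ≤ b) : oIio a ⊓ oIoi b = ⊥ := by
  apply Opens.ext
  show Set.Iio a ∩ Set.Ioi b = ∅
  ext x
  simp only [Set.mem_inter_iff, Set.mem_Iio, Set.mem_Ioi, Set.mem_empty_iff_false, iff_false,
    not_and]
  intro h1 h2
  linarith

lemma oIoi_sup_oIio {a b : ℝ} (h : a < b) : oIoi a ⊔ oIio b = ⊤ := by
  apply Opens.ext
  show Set.Ioi a ∪ Set.Iio b = Set.univ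
  ext x
  simp only [Set.mem_union, Set.mem_Ioi, Set.mem_Iio, Set.mem_univ, iff_true]
  rcases lt_or_ge a x with h1 | h1
  · exact Or.inl h1
  · exact Or.inr (lt_of_le_of_lt h1 h)

lemma oIio_inf_oIoo {s a b : ℝ} (h : s ≤ a) : oIio s ⊓ oIoo a b = ⊥ := by
  apply Opens.ext
  show Set.Iio s ∩ Set.Ioo a b = ∅
  rw [Set.eq_empty_iff_forall_notMem]
  rintro x ⟨h1, h2⟩
  rw [Set.mem_Iio] at h1
  rw [Set.mem_Ioo] at h2
  linarith [h2.1]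

lemma oIoi_inf_oIoo {s a b : ℝ} (h : b ≤ s) : oIoi s ⊓ oIoo a b = ⊥ := by
  apply Opens.ext
  show Set.Ioi s ∩ Set.Ioo a b = ∅
  rw [Set.eq_empty_iff_forall_notMem]
  rintro x ⟨h1, h2⟩
  rw [Set.mem_Ioi] at h1
  rw [Set.mem_Ioo] at h2
  linarith [h2.2]

lemma oIoo_le_oIio {a b c : ℝ} (h : b ≤ c) : oIoo a b ≤ oIio c :=
  fun _ hx => lt_of_lt_of_le hx.2 h

lemma oIoo_le_oIoi {a b c : ℝ} (h : c ≤ a) : oIoo a b ≤ oIoi c :=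
  fun _ hx => lt_of_le_of_lt h hx.1

lemma oIoo_le_oIoo {a b c d : ℝ} (h1 : a ≤ c) (h2 : d ≤ b) : oIoo c d ≤ oIoo a b :=
  fun _ hx => ⟨lt_of_le_of_lt h1 hx.1, lt_of_lt_of_le hx.2 h2⟩

/-- `A ε`, representing `|g₁ - g₂| > ε`. -/
noncomputable def Aex (g₁ g₂ : FrameHom (Opens ℝ) M) (ε : ℝ) : M :=
  ⨆ s : ℝ, (g₁ (oIio s) ⊓ g₂ (oIoi (s + ε))) ⊔ (g₂ (oIio s) ⊓ g₁ (oIoi (s + ε)))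

/-- `B ε`, representing `|g₁ - g₂| < ε`. -/
noncomputable def Bex (g₁ g₂ : FrameHom (Opens ℝ) M) (ε : ℝ) : M :=
  ⨆ s : ℝ, g₁ (oIoo (s - ε / 2) (s + ε / 2)) ⊓ g₂ (oIoo (s - ε / 2) (s + ε / 2))

lemma Aex_comm (g₁ g₂ : FrameHom (Opens ℝ) M) (ε : ℝ) : Aex g₁ g₂ ε = Aex g₂ g₁ ε :=
  iSup_congr fun _ => sup_comm _ _

lemma Bex_comm (g₁ g₂ : FrameHom (Opens ℝ) M) (ε : ℝ) : Bex g₁ g₂ ε = Bex g₂ g₁ ε :=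
  iSup_congr fun _ => inf_comm _ _

/-- P2: `A ε'' ⊓ B ε' = ⊥` when `ε' ≤ ε''`. -/
lemma Aex_inf_Bex (g₁ g₂ : FrameHom (Opens ℝ) M) {ε' ε'' : ℝ} (h : ε' ≤ ε'') :
    Aex g₁ g₂ ε'' ⊓ Bex g₁ g₂ ε' = ⊥ := by
  refine le_antisymm ?_ bot_le
  unfold Aex Bex
  rw [iSup_inf_eq]
  refine iSup_le fun s => ?_
  rw [inf_iSup_eq]
  refine iSup_le fun t => ?_
  rw [inf_sup_right]
  set Z : M := g₁ (oIoo (t - ε' / 2) (t + ε' / 2)) ⊓ g₂ (oIoo (t - ε' / 2) (t + ε' / 2)) with hZ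
  have key : ∀ h₁ h₂ : FrameHom (Opens ℝ) M,
      Z ≤ h₁ (oIoo (t - ε' / 2) (t + ε' / 2)) → Z ≤ h₂ (oIoo (t - ε' / 2) (t + ε' / 2)) →
      (h₁ (oIio s) ⊓ h₂ (oIoi (s + ε''))) ⊓ Z ≤ ⊥ := by
    intro h₁ h₂ hZ1 hZ2
    rcases le_or_gt s (t - ε' / 2) with hc | hc
    · calc (h₁ (oIio s) ⊓ h₂ (oIoi (s + ε''))) ⊓ Z
          ≤ h₁ (oIio s) ⊓ h₁ (oIoo (t - ε' / 2) (t + ε' / 2)) :=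
            inf_le_inf (inf_le_left) hZ1
        _ = h₁ (oIio s ⊓ oIoo (t - ε' / 2) (t + ε' / 2)) := (map_inf h₁ _ _).symm
        _ = h₁ ⊥ := by rw [oIio_inf_oIoo hc]
        _ ≤ ⊥ := le_of_eq (map_bot h₁)
    · have hc2 : t + ε' / 2 ≤ s + ε'' := by linarith
      calc (h₁ (oIio s) ⊓ h₂ (oIoi (s + ε''))) ⊓ Z
          ≤ h₂ (oIoi (s + ε'')) ⊓ h₂ (oIoo (t - ε' / 2) (t + ε' / 2)) :=
            inf_le_inf (inf_le_right) hZ2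
        _ = h₂ (oIoi (s + ε'') ⊓ oIoo (t - ε' / 2) (t + ε' / 2)) := (map_inf h₂ _ _).symm
        _ = h₂ ⊥ := by rw [oIoi_inf_oIoo hc2]
        _ ≤ ⊥ := le_of_eq (map_bot h₂)
  exact sup_le (key g₁ g₂ inf_le_left inf_le_right) (key g₂ g₁ inf_le_right inf_le_left)

/-- Covering `ℝ` by overlapping small intervals. -/
lemma iSup_oIoo_eq_top {γ : ℝ} (hγ : 0 < γ) :
    (⨆ n : ℤ, oIoo ((n : ℝ) * γ) (((n : ℝ) + 2) * γ)) = ⊤ := by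
  apply Opens.ext
  rw [Opens.coe_iSup]
  ext x
  simp only [Set.mem_iUnion, Opens.coe_top, Set.mem_univ, iff_true]
  refine ⟨⌊x / γ⌋ - 1, ?_⟩
  show x ∈ Set.Ioo _ _
  have h1 : (⌊x / γ⌋ : ℝ) * γ ≤ x := (le_div_iff₀ hγ).mp (Int.floor_le _)
  have h2 : x < ((⌊x / γ⌋ : ℝ) + 1) * γ := (div_lt_iff₀ hγ).mp (Int.lt_floor_add_one _)
  constructor
  · push_cast
    nlinarith
  · push_cast
    nlinarith

/-- One pair of small intervals lands below `A δ ⊔ B ε`, ordered case. -/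
lemma pair_le_aux (g₁ g₂ : FrameHom (Opens ℝ) M) {δ ε : ℝ} (hδ : 0 < δ) (hδε : δ < ε)
    {n m : ℤ} (hnm : n ≤ m) :
    g₁ (oIoo ((n : ℝ) * ((ε - δ) / 4)) (((n : ℝ) + 2) * ((ε - δ) / 4))) ⊓
      g₂ (oIoo ((m : ℝ) * ((ε - δ) / 4)) (((m : ℝ) + 2) * ((ε - δ) / 4))) ≤
    Aex g₁ g₂ δ ⊔ Bex g₁ g₂ ε := by
  set γ : ℝ := (ε - δ) / 4 with hγdef
  have hγ : 0 < γ := by rw [hγdef]; linarith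
  rcases le_or_gt (((m : ℝ) - n + 2) * γ) ε with hcase | hcase
  · -- close case: both intervals fit in an interval of length ε centered at t
    refine le_trans ?_ le_sup_right
    set t : ℝ := ((n : ℝ) * γ + ((m : ℝ) + 2) * γ) / 2 with ht
    have hmn : (n : ℝ) ≤ (m : ℝ) := by exact_mod_cast hnm
    have hsub1 : oIoo ((n : ℝ) * γ) (((n : ℝ) + 2) * γ) ≤ oIoo (t - ε / 2) (t + ε / 2) := by
      refine oIoo_le_oIoo ?_ ?_ <;> [skip; skip] <;> rw [ht] <;> nlinarith
    have hsub2 : oIoo ((m : ℝ) * γ) (((m : ℝ) + 2) * γ) ≤ oIoo (t - ε / 2) (t + ε / 2) := by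
      refine oIoo_le_oIoo ?_ ?_ <;> rw [ht] <;> nlinarith
    calc g₁ (oIoo ((n : ℝ) * γ) (((n : ℝ) + 2) * γ)) ⊓
          g₂ (oIoo ((m : ℝ) * γ) (((m : ℝ) + 2) * γ))
        ≤ g₁ (oIoo (t - ε / 2) (t + ε / 2)) ⊓ g₂ (oIoo (t - ε / 2) (t + ε / 2)) :=
          inf_le_inf (OrderHomClass.mono g₁ hsub1) (OrderHomClass.mono g₂ hsub2)
      _ ≤ Bex g₁ g₂ ε := le_iSup (fun s => g₁ (oIoo (s - ε / 2) (s + ε / 2)) ⊓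
            g₂ (oIoo (s - ε / 2) (s + ε / 2))) t
  · -- far case
    refine le_trans ?_ le_sup_left
    set s : ℝ := ((n : ℝ) + 2) * γ with hs
    have hmn : (n : ℝ) ≤ (m : ℝ) := by exact_mod_cast hnm
    have hfar : s + δ ≤ (m : ℝ) * γ := by
      have : ((m : ℝ) - n - 2) * γ ≥ δ := by nlinarith
      rw [hs]; nlinarith
    have h1 : oIoo ((n : ℝ) * γ) (((n : ℝ) + 2) * γ) ≤ oIio s := oIoo_le_oIio (le_of_eq hs.symm)
    have h2 : oIoo ((m : ℝ) * γ) (((m : ℝ) + 2) * γ) ≤ oIoi (s + δ) := oIoo_le_oIoi hfar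
    calc g₁ (oIoo ((n : ℝ) * γ) (((n : ℝ) + 2) * γ)) ⊓
          g₂ (oIoo ((m : ℝ) * γ) (((m : ℝ) + 2) * γ))
        ≤ g₁ (oIio s) ⊓ g₂ (oIoi (s + δ)) :=
          inf_le_inf (OrderHomClass.mono g₁ h1) (OrderHomClass.mono g₂ h2)
      _ ≤ (g₁ (oIio s) ⊓ g₂ (oIoi (s + δ))) ⊔ (g₂ (oIio s) ⊓ g₁ (oIoi (s + δ))) := le_sup_left
      _ ≤ Aex g₁ g₂ δ := le_iSup (fun s => (g₁ (oIio s) ⊓ g₂ (oIoi (s + δ))) ⊔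
            (g₂ (oIio s) ⊓ g₁ (oIoi (s + δ)))) s

/-- P1: `A δ ⊔ B ε = ⊤` when `0 < δ < ε`. -/
lemma Aex_sup_Bex (g₁ g₂ : FrameHom (Opens ℝ) M) {δ ε : ℝ} (hδ : 0 < δ) (hδε : δ < ε) :
    Aex g₁ g₂ δ ⊔ Bex g₁ g₂ ε = ⊤ := by
  refine le_antisymm le_top ?_
  set γ : ℝ := (ε - δ) / 4 with hγdef
  have hγ : 0 < γ := by rw [hγdef]; linarith
  have htop : (⊤ : M) = (⨆ n : ℤ, g₁ (oIoo ((n : ℝ) * γ) (((n : ℝ) + 2) * γ))) ⊓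
      (⨆ m : ℤ, g₂ (oIoo ((m : ℝ) * γ) (((m : ℝ) + 2) * γ))) := by
    rw [← map_iSup, ← map_iSup, iSup_oIoo_eq_top hγ, map_top, map_top, top_inf_eq]
  rw [htop, iSup_inf_eq]
  refine iSup_le fun n => ?_
  rw [inf_iSup_eq]
  refine iSup_le fun m => ?_
  rcases le_total n m with hnm | hnm
  · exact pair_le_aux g₁ g₂ hδ hδε hnm
  · rw [inf_comm, Aex_comm, Bex_comm]
    exact pair_le_aux g₂ g₁ hδ hδε hnm

/-- `Iio a` as a sup of smaller `Iio`s, for `a = k * ε`. -/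
lemma oIio_eq_iSup (k : ℕ) (hk : 0 < k) {ε : ℝ} (hε : 0 < ε) :
    oIio ((k : ℝ) * ε) = ⨆ p : {x : ℝ // 0 < x ∧ x < ε}, oIio ((k : ℝ) * p) := by
  apply Opens.ext
  rw [Opens.coe_iSup]
  ext x
  simp only [Set.mem_iUnion]
  constructor
  · intro hx
    have hx' : x < (k : ℝ) * ε := hx
    have hkpos : (0 : ℝ) < k := by exact_mod_cast hk
    set y : ℝ := max x 0 with hy
    have hy1 : 0 ≤ y := le_max_right _ _
    have hy2 : y < (k : ℝ) * ε := by
      rw [hy]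
      exact max_lt hx' (by positivity)
    refine ⟨⟨(y / k + ε) / 2, ⟨by positivity, ?_⟩⟩, ?_⟩
    · have : y / k < ε := by rwa [div_lt_iff₀ hkpos, mul_comm]
      linarith
    · show x < (k : ℝ) * ((y / k + ε) / 2)
      have hkne : (k : ℝ) ≠ 0 := ne_of_gt hkpos
      have heq : (k : ℝ) * ((y / k + ε) / 2) = (y + k * ε) / 2 := by
        field_simp
      have h3 : y < (k : ℝ) * ((y / k + ε) / 2) := by
        rw [heq]
        linarith
      exact lt_of_le_of_lt (le_max_left x 0) h3
  · rintro ⟨⟨p, hp1, hp2⟩, hx⟩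
    have hx' : x < (k : ℝ) * p := hx
    have hkpos : (0 : ℝ) ≤ k := by positivity
    show x < (k : ℝ) * ε
    calc x < (k : ℝ) * p := hx'
      _ ≤ (k : ℝ) * ε := by nlinarith

/-- `Ioi a` as a sup of `Ioi (a + δ)` over `δ > 0`. -/
lemma oIoi_eq_iSup_s5 (a : ℝ) :
    oIoi a = ⨆ d : {x : ℝ // 0 < x}, oIoi (a + d) := by
  apply Opens.ext
  rw [Opens.coe_iSup]
  ext x
  simp only [Set.mem_iUnion]
  constructor
  · intro hx
    have hx' : a < x := hx
    exact ⟨⟨(x - a) / 2, by linarith⟩, show a + (x - a) / 2 < x by linarith⟩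
  · rintro ⟨⟨d, hd⟩, hx⟩
    have hx' : a + d < x := hx
    show a < x
    linarith

end Aux

/-- Lemma 16, equivalence of (5) and (6) (equivalently, the two expressions of
`|g₁ − g₂| ≤ f/k`): for frame homomorphisms `g₁ g₂ f : Opens ℝ → M` and a positive integer `k`. -/
theorem abs_sub_le_div_iff {M : Type*} [Order.Frame M] (g₁ g₂ f : FrameHom (Opens ℝ) M)
    (k : ℕ) (hk : 0 < k) :
    (∀ ε : ℝ, 0 < ε →
        (⨆ s : ℝ, (g₁ (oIio s) ⊓ g₂ (oIoi (s + ε))) ⊔ (g₂ (oIio s) ⊓ g₁ (oIoi (s + ε)))) ≤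
          f (oIoi ((k : ℝ) * ε))) ↔
      ∀ ε : ℝ, 0 < ε →
        f (oIio ((k : ℝ) * ε)) ≤
          ⨆ s : ℝ, g₁ (oIoo (s - ε / 2) (s + ε / 2)) ⊓ g₂ (oIoo (s - ε / 2) (s + ε / 2)) := by
  have hkR : (0 : ℝ) < k := by exact_mod_cast hk
  constructor
  · intro H ε hε
    show f (oIio ((k : ℝ) * ε)) ≤ Bex g₁ g₂ ε
    rw [oIio_eq_iSup k hk hε, map_iSup]
    refine iSup_le fun ⟨ε', hε'1, hε'2⟩ => ?_
    set δ : ℝ := (ε' + ε) / 2 with hδdef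
    have hδ1 : ε' < δ := by rw [hδdef]; linarith
    have hδ2 : δ < ε := by rw [hδdef]; linarith
    have hδpos : 0 < δ := by linarith
    calc f (oIio ((k : ℝ) * ε'))
        = f (oIio ((k : ℝ) * ε')) ⊓ (Aex g₁ g₂ δ ⊔ Bex g₁ g₂ ε) := by
          rw [Aex_sup_Bex g₁ g₂ hδpos hδ2, inf_top_eq]
      _ = (f (oIio ((k : ℝ) * ε')) ⊓ Aex g₁ g₂ δ) ⊔ (f (oIio ((k : ℝ) * ε')) ⊓ Bex g₁ g₂ ε) :=
          inf_sup_left _ _ _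
      _ ≤ (f (oIio ((k : ℝ) * ε')) ⊓ f (oIoi ((k : ℝ) * δ))) ⊔ Bex g₁ g₂ ε :=
          sup_le_sup (inf_le_inf_left _ (H δ hδpos)) inf_le_right
      _ = f (oIio ((k : ℝ) * ε') ⊓ oIoi ((k : ℝ) * δ)) ⊔ Bex g₁ g₂ ε := by rw [map_inf]
      _ = ⊥ ⊔ Bex g₁ g₂ ε := by
          rw [oIio_inf_oIoi (by nlinarith), map_bot]
      _ = Bex g₁ g₂ ε := bot_sup_eq _
  · intro H ε hε
    show Aex g₁ g₂ ε ≤ f (oIoi ((k : ℝ) * ε))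
    have step1 : Aex g₁ g₂ ε ≤ ⨆ d : {x : ℝ // 0 < x}, Aex g₁ g₂ (ε + d) := by
      unfold Aex
      refine iSup_le fun s => ?_
      rw [oIoi_eq_iSup_s5 (s + ε)]
      rw [map_iSup, map_iSup, inf_iSup_eq, inf_iSup_eq]
      refine sup_le ?_ ?_
      · refine iSup_le fun d => ?_
        refine le_trans ?_ (le_iSup _ d)
        refine le_trans ?_ (le_iSup (fun s => (g₁ (oIio s) ⊓ g₂ (oIoi (s + (ε + d)))) ⊔
          (g₂ (oIio s) ⊓ g₁ (oIoi (s + (ε + d))))) s)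
        rw [add_assoc]
        exact le_sup_left
      · refine iSup_le fun d => ?_
        refine le_trans ?_ (le_iSup _ d)
        refine le_trans ?_ (le_iSup (fun s => (g₁ (oIio s) ⊓ g₂ (oIoi (s + (ε + d)))) ⊔
          (g₂ (oIio s) ⊓ g₁ (oIoi (s + (ε + d))))) s)
        rw [add_assoc]
        exact le_sup_right
    refine le_trans step1 (iSup_le fun ⟨d, hd⟩ => ?_)
    have hmid : 0 < ε + d / 2 := by linarith
    calc Aex g₁ g₂ (ε + d)
        = Aex g₁ g₂ (ε + d) ⊓ (f (oIoi ((k : ℝ) * ε)) ⊔ f (oIio ((k : ℝ) * (ε + d / 2)))) := by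
          rw [← map_sup, oIoi_sup_oIio (by nlinarith), map_top, inf_top_eq]
      _ = (Aex g₁ g₂ (ε + d) ⊓ f (oIoi ((k : ℝ) * ε))) ⊔
            (Aex g₁ g₂ (ε + d) ⊓ f (oIio ((k : ℝ) * (ε + d / 2)))) := inf_sup_left _ _ _
      _ ≤ f (oIoi ((k : ℝ) * ε)) ⊔ (Aex g₁ g₂ (ε + d) ⊓ Bex g₁ g₂ (ε + d / 2)) :=
          sup_le_sup inf_le_right (inf_le_inf_left _ (H (ε + d / 2) hmid))
      _ = f (oIoi ((k : ℝ) * ε)) ⊔ ⊥ := by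
          rw [Aex_inf_Bex g₁ g₂ (by linarith)]
      _ = f (oIoi ((k : ℝ) * ε)) := sup_bot_eq _
end

section
/- Let N be a frame, b ∈ N, and let g, h : Opens ℝ → N be frame homomorphisms such that b ⊔ g(U) = b ⊔ h(U) for every open subset U of ℝ. Then ⨆ { g(U) ⊓ h(V) | U, V open subsets of ℝ with U ∩ V = ∅ } ≤ b. -/
open TopologicalSpace Set

/-- Lemma 20: if `b ⊔ g(U) = b ⊔ h(U)` for every open `U ⊆ ℝ`, then the cozero element of
`|g − h|`, namely `⨆ {g(U) ⊓ h(V) | U ∩ V = ∅}`, is below `b`. -/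
theorem coz_abs_sub_le_of_closed_quotient_eq {N : Type*} [Order.Frame N] (b : N)
    (g h : FrameHom (Opens ℝ) N) (hgh : ∀ U : Opens ℝ, b ⊔ g U = b ⊔ h U) :
    sSup {x : N | ∃ U V : Opens ℝ, (U : Set ℝ) ∩ (V : Set ℝ) = ∅ ∧ x = g U ⊓ h V} ≤ b := by
  apply sSup_le
  rintro x ⟨U, V, hUV, rfl⟩
  have h0 : U ⊓ V = ⊥ := by ext1; simp [hUV]
  have h1 : g U ⊓ g V = ⊥ := by rw [← map_inf, h0, map_bot]
  calc g U ⊓ h V ≤ g U ⊓ (b ⊔ h V) := le_inf inf_le_left (le_trans inf_le_right le_sup_right)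
    _ = g U ⊓ (b ⊔ g V) := by rw [← hgh]
    _ = (g U ⊓ b) ⊔ (g U ⊓ g V) := inf_sup_left _ _ _
    _ ≤ b := by rw [h1]; simp
end

section
/- Let P be a frame, let (g_n) be a sequence of frame homomorphisms Opens ℝ → P with g_n((−∞,0)) = ⊥ for all n, and suppose the sequence is bounded: there is t ∈ ℝ with g_n((t,∞)) = ⊥ for all n. Suppose further that for each m there is a frame homomorphism h_m : Opens ℝ → P satisfying h_m((r,∞)) = ⨆_{n ≥ m} g_n((r,∞)) for every r ∈ ℝ (the pointwise join of the tail). Then the following are equivalent: (i) for every ε > 0, ⨆_m h_m((−∞,ε)) = ⊤; (ii) for every ε > 0, ⨆_m ⨅_{n ≥ m} g_n((−∞,ε)) = ⊤. -/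
open TopologicalSpace Set

/-- Proposition 6: for a bounded sequence of nonnegative frame homomorphisms `g_n` whose
pointwise tail-suprema `h_m` exist, the tail-suprema converge pointwise downward to `0`
iff `⨆_m ⨅_{n ≥ m} g_n((−∞,ε)) = ⊤` for every `ε > 0`. -/
theorem pointwise_conv_iff {P : Type*} [Order.Frame P]
    (g : ℕ → FrameHom (Opens ℝ) P) (hpos : ∀ n, g n (oIio 0) = ⊥)
    (t : ℝ) (hbd : ∀ n, g n (oIoi t) = ⊥)
    (h : ℕ → FrameHom (Opens ℝ) P)
    (hh : ∀ m : ℕ, ∀ r : ℝ, h m (oIoi r) = ⨆ n, ⨆ _ : m ≤ n, g n (oIoi r)) :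
    (∀ ε : ℝ, 0 < ε → (⨆ m, h m (oIio ε)) = ⊤) ↔
      ∀ ε : ℝ, 0 < ε → (⨆ m, ⨅ n, ⨅ _ : m ≤ n, g n (oIio ε)) = ⊤ := by
  have key : ∀ a b : ℝ, a < b → oIio b ⊔ oIoi a = ⊤ := by
    intro a b hab
    apply Opens.ext
    simp only [Opens.coe_sup, Opens.coe_top, oIio, oIoi, Opens.coe_mk]
    ext x
    simp only [Set.mem_union, Set.mem_Iio, Set.mem_Ioi, Set.mem_univ, iff_true]
    rcases lt_or_ge x b with hx | hx
    · exact Or.inl hx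
    · exact Or.inr (lt_of_lt_of_le hab hx)
  have disj : ∀ a : ℝ, oIio a ⊓ oIoi a = ⊥ := by
    intro a
    apply Opens.ext
    simp only [Opens.coe_inf, Opens.coe_bot, oIio, oIoi, Opens.coe_mk]
    ext x
    simp only [Set.mem_inter_iff, Set.mem_Iio, Set.mem_Ioi, Set.mem_empty_iff_false,
      iff_false, not_and]
    intro hx; linarith
  constructor
  · intro H ε hε
    have h2 : (0 : ℝ) < ε / 2 := by linarith
    rw [← top_le_iff, ← H (ε / 2) h2]
    apply iSup_le; intro m
    apply le_iSup_of_le m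
    apply le_iInf; intro n; apply le_iInf; intro hn
    have htop : g n (oIio ε) ⊔ g n (oIoi (ε / 2)) = ⊤ := by
      rw [← map_sup, key (ε / 2) ε (by linarith), map_top]
    have hle : g n (oIoi (ε / 2)) ≤ h m (oIoi (ε / 2)) := by
      rw [hh m (ε / 2)]
      exact le_iSup_of_le n (le_iSup_of_le hn le_rfl)
    have hbot : h m (oIio (ε / 2)) ⊓ g n (oIoi (ε / 2)) ≤ ⊥ := by
      calc h m (oIio (ε / 2)) ⊓ g n (oIoi (ε / 2))
          ≤ h m (oIio (ε / 2)) ⊓ h m (oIoi (ε / 2)) := inf_le_inf_left _ hle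
        _ = h m (oIio (ε / 2) ⊓ oIoi (ε / 2)) := (map_inf _ _ _).symm
        _ = ⊥ := by rw [disj, map_bot]
    calc h m (oIio (ε / 2))
        = h m (oIio (ε / 2)) ⊓ (g n (oIio ε) ⊔ g n (oIoi (ε / 2))) := by
          rw [htop, inf_top_eq]
      _ = (h m (oIio (ε / 2)) ⊓ g n (oIio ε)) ⊔
            (h m (oIio (ε / 2)) ⊓ g n (oIoi (ε / 2))) := inf_sup_left _ _ _
      _ ≤ g n (oIio ε) ⊔ ⊥ := sup_le_sup inf_le_right hbot
      _ = g n (oIio ε) := sup_bot_eq _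
  · intro H ε hε
    have h2 : (0 : ℝ) < ε / 2 := by linarith
    rw [← top_le_iff, ← H (ε / 2) h2]
    apply iSup_le; intro m
    apply le_iSup_of_le m
    set a : P := ⨅ n, ⨅ _ : m ≤ n, g n (oIio (ε / 2)) with ha
    have htop : h m (oIio ε) ⊔ h m (oIoi (ε / 2)) = ⊤ := by
      rw [← map_sup, key (ε / 2) ε (by linarith), map_top]
    have hbot : a ⊓ h m (oIoi (ε / 2)) ≤ ⊥ := by
      rw [hh m (ε / 2), inf_iSup_eq]
      apply iSup_le; intro n
      rw [inf_iSup_eq]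
      apply iSup_le; intro hn
      calc a ⊓ g n (oIoi (ε / 2))
          ≤ g n (oIio (ε / 2)) ⊓ g n (oIoi (ε / 2)) := by
            apply inf_le_inf_right
            exact iInf_le_of_le n (iInf_le_of_le hn le_rfl)
        _ = g n (oIio (ε / 2) ⊓ oIoi (ε / 2)) := (map_inf _ _ _).symm
        _ = ⊥ := by rw [disj, map_bot]
    calc a = a ⊓ (h m (oIio ε) ⊔ h m (oIoi (ε / 2))) := by rw [htop, inf_top_eq]
      _ = (a ⊓ h m (oIio ε)) ⊔ (a ⊓ h m (oIoi (ε / 2))) := inf_sup_left _ _ _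
      _ ≤ h m (oIio ε) ⊔ ⊥ := sup_le_sup inf_le_right hbot
      _ = h m (oIio ε) := sup_bot_eq _
end

section
/- Let M be a frame and let (g_n) and f be frame homomorphisms Opens ℝ → M with g_n((−∞,0)) = ⊥ for all n and f((−∞,0)) = ⊥. Suppose g_n → 0 with regulator f in the sense that for every positive integer k there exists m_k such that for all n ≥ m_k and all ε > 0, f((−kε, kε)) ≤ g_n((−ε, ε)). Then for every ε > 0, ⨆_m ⨅_{n ≥ m} g_n((−ε, ε)) = ⊤. -/
open TopologicalSpace Set

/-- Proposition 24 (for nonnegative sequences converging to `0`): relative uniform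
convergence implies pointwise convergence. -/
theorem ruConv_implies_pointwiseConv {M : Type*} [Order.Frame M]
    (g : ℕ → FrameHom (Opens ℝ) M) (f : FrameHom (Opens ℝ) M)
    (hpos : ∀ n, g n (oIio 0) = ⊥) (hf : f (oIio 0) = ⊥)
    (hconv : ∀ k : ℕ, 0 < k → ∃ m : ℕ, ∀ n, m ≤ n → ∀ ε : ℝ, 0 < ε →
      f (oIoo (-((k : ℝ) * ε)) ((k : ℝ) * ε)) ≤ g n (oIoo (-ε) ε)) :
    ∀ ε : ℝ, 0 < ε → (⨆ m, ⨅ n, ⨅ _ : m ≤ n, g n (oIoo (-ε) ε)) = ⊤ := by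
  intro ε hε
  have htop : (⨆ k : ℕ, oIoo (-(((k : ℝ) + 1) * ε)) (((k : ℝ) + 1) * ε)) = ⊤ := by
    ext x
    simp only [oIoo, Opens.coe_iSup, Opens.coe_mk, Opens.coe_top, Set.mem_iUnion, Set.mem_Ioo,
      Set.mem_univ, iff_true]
    obtain ⟨k, hk⟩ := exists_nat_gt (|x| / ε)
    refine ⟨k, ?_, ?_⟩
    · have : |x| < ((k : ℝ) + 1) * ε := by
        calc |x| = |x| / ε * ε := by field_simp
        _ < ((k : ℝ) + 1) * ε := by
          apply mul_lt_mul_of_pos_right _ hε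
          linarith
      linarith [neg_abs_le x]
    · have : |x| < ((k : ℝ) + 1) * ε := by
        calc |x| = |x| / ε * ε := by field_simp
        _ < ((k : ℝ) + 1) * ε := by
          apply mul_lt_mul_of_pos_right _ hε
          linarith
      linarith [le_abs_self x]
  rw [eq_top_iff]
  calc (⊤ : M) = f ⊤ := (map_top f).symm
    _ = f (⨆ k : ℕ, oIoo (-(((k : ℝ) + 1) * ε)) (((k : ℝ) + 1) * ε)) := by rw [htop]
    _ = ⨆ k : ℕ, f (oIoo (-(((k : ℝ) + 1) * ε)) (((k : ℝ) + 1) * ε)) := map_iSup f _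
    _ ≤ ⨆ m, ⨅ n, ⨅ _ : m ≤ n, g n (oIoo (-ε) ε) := by
        refine iSup_le fun k => ?_
        obtain ⟨m, hm⟩ := hconv (k + 1) (Nat.succ_pos k)
        refine le_trans ?_ (le_iSup _ m)
        refine le_iInf fun n => le_iInf fun hn => ?_
        have := hm n hn ε hε
        push_cast at this
        exact this
end

section
/- Let M be a frame, let (g_n) be a sequence of frame homomorphisms Opens ℝ → M with g_n((−∞,0)) = ⊥ for all n, which is increasing in the sense that g_n((r,∞)) ≤ g_{n+1}((r,∞)) for all n and all r ∈ ℝ, and let g₀, f : Opens ℝ → M be frame homomorphisms with f((−∞,0)) = ⊥. Suppose g_n → g₀ with regulator f: for every positive integer k there exists m_k such that for all n ≥ m_k and all ε > 0, ⨆_{s ∈ ℝ} [ (g₀((−∞,s)) ⊓ g_n((s+ε,∞))) ⊔ (g_n((−∞,s)) ⊓ g₀((s+ε,∞))) ] ≤ f((kε, ∞)). Then g₀((r,∞)) = ⨆_n g_n((r,∞)) for every r ∈ ℝ; in particular the cozero elements satisfy g₀((0,∞)) = ⨆_n g_n((0,∞)). -/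
open TopologicalSpace Set

lemma oIio_inf_oIoi_s11 (u v : ℝ) (h : u ≤ v) : (oIio u ⊓ oIoi v : Opens ℝ) = ⊥ := by
  ext x
  simp only [oIio, oIoi, Opens.coe_inf, Opens.coe_bot, Set.mem_inter_iff, Set.mem_empty_iff_false,
    iff_false, Opens.coe_mk, Set.mem_Iio, Set.mem_Ioi]
  rintro ⟨h1, h2⟩; linarith

lemma oIio_sup_oIoi (a b : ℝ) (h : b < a) : (oIio a ⊔ oIoi b : Opens ℝ) = ⊤ := by
  ext x
  simp only [oIio, oIoi, Opens.coe_sup, Opens.coe_top, Opens.coe_mk, Set.mem_union, Set.mem_Iio,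
    Set.mem_Ioi, Set.mem_univ, iff_true]
  by_cases hx : x < a
  · exact Or.inl hx
  · exact Or.inr (by linarith [not_lt.mp hx])

lemma iSup_oIio : (⨆ u : ℝ, oIio u) = (⊤ : Opens ℝ) := by
  ext x
  simp only [Opens.coe_top, Set.mem_univ, iff_true, Opens.coe_iSup, Set.mem_iUnion]
  exact ⟨x + 1, by simp [oIio]⟩

lemma oIoi_mono {a b : ℝ} (h : a ≤ b) : oIoi b ≤ oIoi a := fun x hx => lt_of_le_of_lt h hx

lemma oIoi_eq_iSup_s11 (r : ℝ) : oIoi r = ⨆ n : ℕ, oIoi (r + 1 / (n + 1)) := by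
  ext x
  simp only [oIoi, Opens.coe_mk, Set.mem_Ioi, Opens.coe_iSup, Set.mem_iUnion]
  constructor
  · intro hx
    obtain ⟨n, hn⟩ := exists_nat_one_div_lt (sub_pos.mpr hx)
    exact ⟨n, by push_cast at hn ⊢; linarith⟩
  · rintro ⟨n, hn⟩
    have : (0:ℝ) < 1 / (n + 1) := by positivity
    linarith

lemma kill {M : Type*} [Order.Frame M] (f : FrameHom (Opens ℝ) M) (a b : M)
    (h : ∀ u : ℝ, 0 < u → b ≤ a ⊔ f (oIoi u)) : b ≤ a := by
  have htop : (⊤ : M) = ⨆ u : ℝ, f (oIio u) := by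
    rw [← map_iSup, iSup_oIio, map_top]
  have hb : b = ⨆ u : ℝ, b ⊓ f (oIio u) := by
    rw [← inf_iSup_eq, ← htop, inf_top_eq]
  rw [hb]
  refine iSup_le fun u => ?_
  have hv : (0:ℝ) < max u 1 := lt_of_lt_of_le one_pos (le_max_right _ _)
  calc b ⊓ f (oIio u) ≤ (a ⊔ f (oIoi (max u 1))) ⊓ f (oIio u) :=
        inf_le_inf_right _ (h _ hv)
    _ = (a ⊓ f (oIio u)) ⊔ (f (oIoi (max u 1)) ⊓ f (oIio u)) := inf_sup_right _ _ _
    _ ≤ a ⊔ ⊥ := by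
        apply sup_le_sup inf_le_left
        rw [← map_inf, inf_comm, oIio_inf_oIoi_s11 u (max u 1) (le_max_left _ _), map_bot]
    _ = a := sup_bot_eq a


/-- Corollary 1: if an increasing sequence of nonnegative frame homomorphisms converges
relatively uniformly to `g₀` with regulator `f`, then it converges pointwise upward to `g₀`;
in particular the cozero elements satisfy `g₀((0,∞)) = ⨆ n, g n((0,∞))`. -/
theorem increasing_ruConv_pointwise_sup {M : Type*} [Order.Frame M]
    (g : ℕ → FrameHom (Opens ℝ) M) (hpos : ∀ n, g n (oIio 0) = ⊥)
    (hmono : ∀ n : ℕ, ∀ r : ℝ, g n (oIoi r) ≤ g (n + 1) (oIoi r))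
    (g₀ f : FrameHom (Opens ℝ) M) (hf : f (oIio 0) = ⊥)
    (hconv : ∀ k : ℕ, 0 < k → ∃ m : ℕ, ∀ n, m ≤ n → ∀ ε : ℝ, 0 < ε →
      (⨆ s : ℝ, (g₀ (oIio s) ⊓ g n (oIoi (s + ε))) ⊔ (g n (oIio s) ⊓ g₀ (oIoi (s + ε)))) ≤
        f (oIoi ((k : ℝ) * ε))) :
    (∀ r : ℝ, g₀ (oIoi r) = ⨆ n, g n (oIoi r)) ∧ g₀ (oIoi 0) = ⨆ n, g n (oIoi 0) := by
  have hmono' : ∀ r : ℝ, Monotone (fun n => g n (oIoi r)) := fun r =>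
    monotone_nat_of_le_succ (fun n => hmono n r)
  -- choice of k given u, δ
  have hk : ∀ u δ : ℝ, 0 < u → 0 < δ → ∃ k : ℕ, 0 < k ∧ u ≤ (k : ℝ) * (δ / 2) := by
    intro u δ hu hδ
    obtain ⟨k, hk⟩ := exists_nat_ge (u / (δ / 2))
    refine ⟨k + 1, Nat.succ_pos k, ?_⟩
    have hδ2 : (0:ℝ) < δ / 2 := by linarith
    have : u / (δ / 2) ≤ (k + 1 : ℕ) := by push_cast; push_cast at hk; linarith
    calc u = u / (δ / 2) * (δ / 2) := by field_simp
      _ ≤ ((k + 1 : ℕ) : ℝ) * (δ / 2) := by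
          exact mul_le_mul_of_nonneg_right this hδ2.le
  have main : ∀ r : ℝ, g₀ (oIoi r) = ⨆ n, g n (oIoi r) := by
    intro r
    apply le_antisymm
    · -- g₀ ≤ sup
      conv_lhs => rw [oIoi_eq_iSup_s11 r, map_iSup]
      refine iSup_le fun j => ?_
      set δ : ℝ := 1 / (j + 1) with hδdef
      have hδ : (0:ℝ) < δ := by positivity
      apply kill f
      intro u hu
      obtain ⟨k, hk0, hku⟩ := hk u δ hu hδ
      obtain ⟨m, hm⟩ := hconv k hk0
      have hδ2 : (0:ℝ) < δ / 2 := by linarith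
      have hcover : (⊤ : M) = g m (oIio (r + δ / 2)) ⊔ g m (oIoi r) := by
        rw [← map_sup, oIio_sup_oIoi _ _ (by linarith), map_top]
      have h1 : g₀ (oIoi (r + δ)) ⊓ g m (oIio (r + δ / 2)) ≤ f (oIoi u) := by
        have hle : g m (oIio (r + δ / 2)) ⊓ g₀ (oIoi ((r + δ / 2) + δ / 2)) ≤
            f (oIoi ((k : ℝ) * (δ / 2))) := by
          refine le_trans ?_ (hm m le_rfl (δ / 2) hδ2)
          refine le_trans le_sup_right (le_iSup (fun s => (g₀ (oIio s) ⊓ g m (oIoi (s + δ / 2))) ⊔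
            (g m (oIio s) ⊓ g₀ (oIoi (s + δ / 2)))) (r + δ / 2))
        rw [inf_comm]
        refine le_trans ?_ (le_trans hle (FrameHom.toFun_eq_coe f ▸
          OrderHomClass.mono f (oIoi_mono hku)))
        apply inf_le_inf_left
        exact le_of_eq (by ring_nf)
      calc g₀ (oIoi (r + δ)) = g₀ (oIoi (r + δ)) ⊓ ⊤ := (inf_top_eq _).symm
        _ = (g₀ (oIoi (r + δ)) ⊓ g m (oIio (r + δ / 2))) ⊔ (g₀ (oIoi (r + δ)) ⊓ g m (oIoi r)) := by
            rw [hcover, inf_sup_left]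
        _ ≤ f (oIoi u) ⊔ g m (oIoi r) := sup_le_sup h1 inf_le_right
        _ ≤ f (oIoi u) ⊔ ⨆ n, g n (oIoi r) := sup_le_sup (le_refl _) (le_iSup (fun n => g n (oIoi r)) m)
        _ = (⨆ n, g n (oIoi r)) ⊔ f (oIoi u) := sup_comm _ _
    · -- sup ≤ g₀
      refine iSup_le fun n => ?_
      conv_lhs => rw [oIoi_eq_iSup_s11 r, map_iSup]
      refine iSup_le fun j => ?_
      set δ : ℝ := 1 / (j + 1) with hδdef
      have hδ : (0:ℝ) < δ := by positivity
      apply kill f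
      intro u hu
      obtain ⟨k, hk0, hku⟩ := hk u δ hu hδ
      obtain ⟨m, hm⟩ := hconv k hk0
      set N := max n m with hN
      have hδ2 : (0:ℝ) < δ / 2 := by linarith
      have hcover : (⊤ : M) = g₀ (oIio (r + δ / 2)) ⊔ g₀ (oIoi r) := by
        rw [← map_sup, oIio_sup_oIoi _ _ (by linarith), map_top]
      have h1 : g N (oIoi (r + δ)) ⊓ g₀ (oIio (r + δ / 2)) ≤ f (oIoi u) := by
        have hle : g₀ (oIio (r + δ / 2)) ⊓ g N (oIoi ((r + δ / 2) + δ / 2)) ≤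
            f (oIoi ((k : ℝ) * (δ / 2))) := by
          refine le_trans ?_ (hm N (le_max_right _ _) (δ / 2) hδ2)
          refine le_trans le_sup_left (le_iSup (fun s => (g₀ (oIio s) ⊓ g N (oIoi (s + δ / 2))) ⊔
            (g N (oIio s) ⊓ g₀ (oIoi (s + δ / 2)))) (r + δ / 2))
        rw [inf_comm]
        refine le_trans ?_ (le_trans hle (OrderHomClass.mono f (oIoi_mono hku)))
        apply inf_le_inf_left
        exact le_of_eq (by ring_nf)
      calc g n (oIoi (r + δ)) ≤ g N (oIoi (r + δ)) := hmono' _ (le_max_left _ _)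
        _ = g N (oIoi (r + δ)) ⊓ ⊤ := (inf_top_eq _).symm
        _ = (g N (oIoi (r + δ)) ⊓ g₀ (oIio (r + δ / 2))) ⊔ (g N (oIoi (r + δ)) ⊓ g₀ (oIoi r)) := by
            rw [hcover, inf_sup_left]
        _ ≤ f (oIoi u) ⊔ g₀ (oIoi r) := sup_le_sup h1 inf_le_right
        _ = g₀ (oIoi r) ⊔ f (oIoi u) := sup_comm _ _
  exact ⟨main, main 0⟩
end

section
/- One-step epicness of relatively uniformly dense sublattices: let H and K be vector lattices with K archimedean, let G ⊆ H be a subset, and let θ₁, θ₂ : H → K be ℝ-linear maps preserving binary suprema which agree on G. Suppose h ∈ H is the relative uniform limit of a sequence from G: there exist a sequence (g_n) with g_n ∈ G for all n and an element f ∈ H with f ≥ 0 such that for every positive integer k there is m_k with |h − g_n| ≤ (1/k)·f for all n ≥ m_k. Then θ₁(h) = θ₂(h). -/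
/-- Relative uniform convergence: `g_n → g₀ (f)` iff for every positive integer `k` there is
`m_k` such that `|g₀ − g_n| ≤ (1/k)·f` for all `n ≥ m_k`.  Here `|x| = x ⊔ (−x)`. -/
def RuConv {G : Type*} [Lattice G] [AddCommGroup G] [Module ℝ G]
    (g : ℕ → G) (g₀ f : G) : Prop :=
  ∀ k : ℕ, 0 < k → ∃ m : ℕ, ∀ n, m ≤ n → (g₀ - g n) ⊔ -(g₀ - g n) ≤ (1 / (k : ℝ)) • f

/-- Proposition 1 (one-step epicness): two vector lattice homomorphisms into an archimedean
vector lattice which agree on `G` also agree on every relative uniform limit of a sequence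
from `G`. -/
theorem eq_on_ru_limit {H K : Type*}
    [Lattice H] [AddCommGroup H] [CovariantClass H H (· + ·) (· ≤ ·)]
    [Module ℝ H] [PosSMulMono ℝ H]
    [Lattice K] [AddCommGroup K] [CovariantClass K K (· + ·) (· ≤ ·)]
    [Module ℝ K] [PosSMulMono ℝ K]
    (harch : ∀ x y : K, (∀ n : ℕ, 0 < n → n • x ≤ y) → x ≤ 0)
    (G : Set H) (θ₁ θ₂ : H →ₗ[ℝ] K)
    (hθ₁ : ∀ x y : H, θ₁ (x ⊔ y) = θ₁ x ⊔ θ₁ y) (hθ₂ : ∀ x y : H, θ₂ (x ⊔ y) = θ₂ x ⊔ θ₂ y)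
    (hagree : ∀ x ∈ G, θ₁ x = θ₂ x)
    (h : H) (g : ℕ → H) (hg : ∀ n, g n ∈ G) (f : H) (hf : 0 ≤ f)
    (hconv : RuConv g h f) :
    θ₁ h = θ₂ h := by
  -- monotonicity of θ₁, θ₂
  have mono1 : ∀ x y : H, x ≤ y → θ₁ x ≤ θ₁ y := by
    intro x y hxy
    have : θ₁ y = θ₁ x ⊔ θ₁ y := by rw [← hθ₁, sup_eq_right.mpr hxy]
    rw [this]; exact le_sup_left
  have mono2 : ∀ x y : H, x ≤ y → θ₂ x ≤ θ₂ y := by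
    intro x y hxy
    have : θ₂ y = θ₂ x ⊔ θ₂ y := by rw [← hθ₂, sup_eq_right.mpr hxy]
    rw [this]; exact le_sup_left
  set F : K := θ₁ f + θ₂ f with hF
  -- key estimate
  have key : ∀ k : ℕ, 0 < k → (θ₁ h - θ₂ h) ⊔ -(θ₁ h - θ₂ h) ≤ (1 / (k : ℝ)) • F := by
    intro k hk
    obtain ⟨m, hm⟩ := hconv k hk
    have hle := hm m le_rfl
    have h1 : h - g m ≤ (1 / (k : ℝ)) • f := le_trans le_sup_left hle
    have h2 : -(h - g m) ≤ (1 / (k : ℝ)) • f := le_trans le_sup_right hle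
    have e1 : θ₁ h - θ₁ (g m) ≤ (1 / (k : ℝ)) • θ₁ f := by
      have := mono1 _ _ h1
      simpa [map_sub, map_smul] using this
    have e1' : θ₁ (g m) - θ₁ h ≤ (1 / (k : ℝ)) • θ₁ f := by
      have := mono1 _ _ h2
      simpa [map_sub, map_neg, map_smul, neg_sub] using this
    have e2 : θ₂ h - θ₂ (g m) ≤ (1 / (k : ℝ)) • θ₂ f := by
      have := mono2 _ _ h1
      simpa [map_sub, map_smul] using this
    have e2' : θ₂ (g m) - θ₂ h ≤ (1 / (k : ℝ)) • θ₂ f := by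
      have := mono2 _ _ h2
      simpa [map_sub, map_neg, map_smul, neg_sub] using this
    have hag : θ₁ (g m) = θ₂ (g m) := hagree _ (hg m)
    have d1 : θ₁ h - θ₂ h ≤ (1 / (k : ℝ)) • F := by
      have := add_le_add e1 e2'
      rw [hag] at this
      calc θ₁ h - θ₂ h = (θ₁ h - θ₂ (g m)) + (θ₂ (g m) - θ₂ h) := by abel
        _ ≤ (1 / (k : ℝ)) • θ₁ f + (1 / (k : ℝ)) • θ₂ f := this
        _ = (1 / (k : ℝ)) • F := by rw [hF, smul_add]
    have d2 : -(θ₁ h - θ₂ h) ≤ (1 / (k : ℝ)) • F := by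
      have := add_le_add e1' e2
      rw [hag] at this
      calc -(θ₁ h - θ₂ h) = (θ₂ (g m) - θ₁ h) + (θ₂ h - θ₂ (g m)) := by abel
        _ ≤ (1 / (k : ℝ)) • θ₁ f + (1 / (k : ℝ)) • θ₂ f := this
        _ = (1 / (k : ℝ)) • F := by rw [hF, smul_add]
    exact sup_le d1 d2
  have main : ∀ x : K, (∀ k : ℕ, 0 < k → x ≤ (1 / (k : ℝ)) • F) → x ≤ 0 := by
    intro x hx
    apply harch x F
    intro n hn
    have hxn := hx n hn
    have hn' : (0:ℝ) < (n:ℝ) := by exact_mod_cast hn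
    have := smul_le_smul_of_nonneg_left hxn (le_of_lt hn')
    rw [smul_smul, mul_one_div, div_self (ne_of_gt hn'), one_smul] at this
    calc n • x = (n : ℝ) • x := by simp [Nat.cast_smul_eq_nsmul]
      _ ≤ F := this
  have p1 : θ₁ h - θ₂ h ≤ 0 :=
    main _ fun k hk => le_trans le_sup_left (key k hk)
  have p2 : -(θ₁ h - θ₂ h) ≤ 0 :=
    main _ fun k hk => le_trans le_sup_right (key k hk)
  have : θ₁ h - θ₂ h = 0 := le_antisymm p1 (by simpa using neg_nonpos.mp p2)
  exact sub_eq_zero.mp this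
end

section
/- Let q : K → M be a dense surjective frame homomorphism (a compactification map when ⊤ is a compact element of K), let p : Opens(EReal) → Opens(ℝ) be the frame homomorphism sending an open subset U of the extended reals EReal = ℝ ∪ {±∞} to U ∩ ℝ (i.e., the preimage of U under the coercion ℝ → EReal), and let h' : Opens(EReal) → K be a frame homomorphism. Then there exists a frame homomorphism h : Opens(ℝ) → M with h ∘ p = q ∘ h' if and only if q(h'(D)) = ⊤, where D is the open subset of EReal consisting of the finite points (the range of the coercion ℝ → EReal). -/
open TopologicalSpace Set

/-!
A frame homomorphism `k : Opens Y → N` factors through the restriction `Opens.comap f` along an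
open embedding `f : X → Y` exactly when `k` sends the open set `range f` to `⊤`: the factor is
`U ↦ k (f '' U)`, since the image under an open embedding preserves joins and meets, and
`f '' (f ⁻¹' V) = V ⊓ range f` is sent by `k` to `k V ⊓ ⊤ = k V`.
Here `f` is the inclusion `ℝ → EReal`, whose range is `D`, and `k = q ∘ h'`.
-/

/-- The frame homomorphism `p : Opens(EReal) → Opens(ℝ)`, `U ↦ U ∩ ℝ`. -/
noncomputable def pER : FrameHom (Opens EReal) (Opens ℝ) :=
  Opens.comap ⟨((↑) : ℝ → EReal), continuous_coe_real_ereal⟩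

/-- The domain `D = ℝ` of finite points of `EReal`. -/
noncomputable def finitePoints : Opens EReal :=
  ⟨Set.range ((↑) : ℝ → EReal), by rw [EReal.range_coe_eq_Ioo]; exact isOpen_Ioo⟩

namespace IsOpenMap

variable {X Y : Type*} [TopologicalSpace X] [TopologicalSpace Y] {f : X → Y}

def imageOpens (hf : IsOpenMap f) (U : Opens X) : Opens Y :=
  ⟨f '' U, hf _ U.isOpen⟩

@[simp]
theorem coe_imageOpens (hf : IsOpenMap f) (U : Opens X) : (hf.imageOpens U : Set Y) = f '' U :=
  rfl

theorem imageOpens_sSup (hf : IsOpenMap f) (S : Set (Opens X)) :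
    hf.imageOpens (sSup S) = sSup (hf.imageOpens '' S) :=
  Opens.ext <| by simp [image_iUnion₂]

theorem imageOpens_inf (hf : IsOpenMap f) (hinj : Function.Injective f) (U V : Opens X) :
    hf.imageOpens (U ⊓ V) = hf.imageOpens U ⊓ hf.imageOpens V :=
  Opens.ext (image_inter hinj)

theorem imageOpens_top (hf : IsOpenMap f) :
    hf.imageOpens ⊤ = ⟨range f, hf.isOpen_range⟩ :=
  Opens.ext image_univ

theorem imageOpens_comap (hf : IsOpenMap f) (hcont : Continuous f) (V : Opens Y) :
    hf.imageOpens (Opens.comap ⟨f, hcont⟩ V) = V ⊓ ⟨range f, hf.isOpen_range⟩ :=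
  Opens.ext image_preimage_eq_inter_range

end IsOpenMap

namespace Topology.IsOpenEmbedding

variable {X Y N : Type*} [TopologicalSpace X] [TopologicalSpace Y] [CompleteLattice N] {f : X → Y}

theorem exists_frameHom_comp_comap_eq_iff (hf : IsOpenEmbedding f) (k : FrameHom (Opens Y) N) :
    (∃ h : FrameHom (Opens X) N, h.comp (Opens.comap ⟨f, hf.continuous⟩) = k) ↔
      k ⟨range f, hf.isOpen_range⟩ = ⊤ := by
  constructor
  · rintro ⟨h, rfl⟩
    have : Opens.comap ⟨f, hf.continuous⟩ ⟨range f, hf.isOpen_range⟩ = ⊤ :=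
      Opens.ext (preimage_range f)
    simp [this]
  · intro hrange
    refine ⟨{ toFun := fun U => k (hf.isOpenMap.imageOpens U)
              map_inf' := fun U V => ?_
              map_top' := ?_
              map_sSup' := fun S => ?_ }, ?_⟩
    · simp [hf.isOpenMap.imageOpens_inf hf.injective]
    · simpa [hf.isOpenMap.imageOpens_top] using hrange
    · rw [hf.isOpenMap.imageOpens_sSup, map_sSup, image_image]
    · ext V : 1
      simp [hf.isOpenMap.imageOpens_comap hf.continuous, hrange]

end Topology.IsOpenEmbedding

theorem drops_iff_domain_of_reality_general {K M : Type*} [Order.Frame K] [Order.Frame M]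
    (q : FrameHom K M) (h' : FrameHom (Opens EReal) K) :
    (∃ h : FrameHom (Opens ℝ) M, h.comp pER = q.comp h') ↔ q (h' finitePoints) = ⊤ :=
  EReal.isOpenEmbedding_coe.exists_frameHom_comp_comap_eq_iff (q.comp h')

/-- Lemma 21(1): for a dense surjective frame homomorphism `q : K → M` and a frame
homomorphism `h' : Opens(EReal) → K`, there is a frame homomorphism `h : Opens(ℝ) → M`
with `h ∘ p = q ∘ h'` iff `q` sends the domain of reality of `h'` to `⊤`. -/
theorem drops_iff_domain_of_reality {K M : Type*} [Order.Frame K] [Order.Frame M]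
    (q : FrameHom K M) (hdense : ∀ a : K, q a = ⊥ → a = ⊥)
    (hsurj : Function.Surjective q) (h' : FrameHom (Opens EReal) K) :
    (∃ h : FrameHom (Opens ℝ) M, h.comp pER = q.comp h') ↔ q (h' finitePoints) = ⊤ :=
  drops_iff_domain_of_reality_general q h'
end
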